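/- arXiv:0908.3973 — 2 statements merged into one kernel-verified Lean document; each statement's English description precedes it below -/
import Mathlib

section
/- Hurwitz's theorem: For any irrational real number ξ there exist infinitely many rational numbers p/q (with p ∈ ℤ, q a positive integer) such that |ξ − p/q| < 1/(√5 · q²). -/
/-!
Let `ξ_n`, `a_n = ⌊ξ_n⌋` and `p_n / q_n` be the complete quotients, partial quotients and
convergents of the continued fraction of `ξ`. Then `|ξ - p_n / q_n| = 1 / (q_n ^ 2 ν_n)` with
`ν_n = ξ_{n+1} + q_{n-1} / q_n`, and for `u = ξ_{n+2}`, `v_n = q_n / q_{n+1}` one has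
`ν_{n+1} = u + v_n` and `ν_n = 1 / u + 1 / v_n`. If both are at most `√5`, then
`v_n ^ 2 - √5 v_n + 1 ≤ 0`, so `v_n ≥ (√5 - 1) / 2`. If `ν ≤ √5` at three consecutive indices,
then `v_n` and `v_{n+1}` are both at least `(√5 - 1) / 2`, while
`1 / v_{n+1} = a_{n+2} + v_n ≥ (√5 + 1) / 2` forces the rational `v_{n+1}` to equal the irrational
`(√5 - 1) / 2`. Hence among any three consecutive convergents one satisfies the bound, and the
denominators `q_n ≥ n` are unbounded.
-/

namespace Hurwitz

section Continuants

variable (a : ℕ → ℤ)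

/-- Numerators of the convergents of `[a 0; a 1, a 2, …]`, shifted by two: `convNum a (n + 2)` is
the numerator `p_n` of the `n`-th convergent, and `convNum a 0 = p_{-2}`, `convNum a 1 = p_{-1}`. -/
def convNum : ℕ → ℤ
  | 0 => 0
  | 1 => 1
  | n + 2 => a n * convNum (n + 1) + convNum n

/-- Denominators of the convergents, with the same shift as `convNum`. -/
def convDen : ℕ → ℤ
  | 0 => 1
  | 1 => 0
  | n + 2 => a n * convDen (n + 1) + convDen n

theorem convNum_mul_convDen_succ_sub (n : ℕ) :
    convNum a n * convDen a (n + 1) - convNum a (n + 1) * convDen a n = (-1) ^ (n + 1) := by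
  induction n with
  | zero => simp [convNum, convDen]
  | succ n ih =>
    simp only [convNum, convDen, pow_succ] at ih ⊢
    linear_combination -ih

theorem isCoprime_convNum_convDen : ∀ n, IsCoprime (convNum a n) (convDen a n)
  | 0 => isCoprime_zero_left.mpr isUnit_one
  | n + 1 => by
    have h := convNum_mul_convDen_succ_sub a n
    have hsq : ((-1 : ℤ) ^ (n + 1)) ^ 2 = 1 := by rw [← pow_mul, pow_mul']; simp
    exact ⟨-((-1) ^ (n + 1) * convDen a n), (-1) ^ (n + 1) * convNum a n, by
      linear_combination (-1) ^ (n + 1) * h + hsq⟩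

variable {a}

theorem convDen_nonneg (ha : ∀ n, 1 ≤ a (n + 1)) : ∀ n, 0 ≤ convDen a n
  | 0 => zero_le_one
  | 1 => le_rfl
  | 2 => by simp [convDen]
  | n + 3 => by
    have := ha n
    have := convDen_nonneg ha (n + 1)
    have := convDen_nonneg ha (n + 2)
    simp only [convDen] at *
    nlinarith

theorem one_le_convDen (ha : ∀ n, 1 ≤ a (n + 1)) : ∀ n, 1 ≤ convDen a (n + 2)
  | 0 => by simp [convDen]
  | n + 1 => by
    have := ha n
    have := convDen_nonneg ha (n + 1)
    have := one_le_convDen ha n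
    show 1 ≤ a (n + 1) * convDen a (n + 2) + convDen a (n + 1)
    nlinarith

theorem le_convDen (ha : ∀ n, 1 ≤ a (n + 1)) : ∀ n : ℕ, (n : ℤ) ≤ convDen a (n + 2)
  | 0 => zero_le_one.trans (one_le_convDen ha 0)
  | 1 => by simpa [convDen] using ha 0
  | n + 2 => by
    have := ha (n + 1)
    have := one_le_convDen ha n
    have := le_convDen ha (n + 1)
    show _ ≤ a (n + 2) * convDen a (n + 3) + convDen a (n + 2)
    push_cast at *
    nlinarith

theorem convDen_pos (ha : ∀ n, 1 ≤ a (n + 1)) (n : ℕ) : 0 < convDen a (n + 2) :=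
  one_pos.trans_le (one_le_convDen ha n)

/-- The ratio `q_{n-1} / q_n` of consecutive denominators. -/
noncomputable def denRatio (a : ℕ → ℤ) (n : ℕ) : ℝ := (convDen a (n + 1) : ℝ) / convDen a (n + 2)

theorem denRatio_pos (ha : ∀ n, 1 ≤ a (n + 1)) (n : ℕ) : 0 < denRatio a (n + 1) := by
  have h₁ : (1 : ℝ) ≤ convDen a (n + 2) := by exact_mod_cast one_le_convDen ha n
  have h₂ : (1 : ℝ) ≤ convDen a (n + 3) := by exact_mod_cast one_le_convDen ha (n + 1)
  exact div_pos (by linarith) (by linarith)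

theorem inv_denRatio_succ (ha : ∀ n, 1 ≤ a (n + 1)) (n : ℕ) :
    (denRatio a (n + 1))⁻¹ = a (n + 1) + denRatio a n := by
  have h : (convDen a (n + 2) : ℝ) ≠ 0 := by exact_mod_cast (convDen_pos ha n).ne'
  rw [denRatio, denRatio, inv_div, show convDen a (n + 1 + 2)
    = a (n + 1) * convDen a (n + 2) + convDen a (n + 1) from rfl]
  push_cast
  field_simp

def convergent (a : ℕ → ℤ) (n : ℕ) : ℚ := convNum a (n + 2) / convDen a (n + 2)

theorem den_convergent (ha : ∀ n, 1 ≤ a (n + 1)) (n : ℕ) :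
    ((convergent a n).den : ℤ) = convDen a (n + 2) :=
  Rat.den_div_eq_of_coprime (convDen_pos ha n)
    (Int.isCoprime_iff_gcd_eq_one.mp (isCoprime_convNum_convDen a (n + 2)))

end Continuants

theorem sq_sub_mul_add_one_nonpos {u v s : ℝ} (hu : 0 < u) (hv : 0 < v) (h : u + v ≤ s)
    (h' : u⁻¹ + v⁻¹ ≤ s) : v ^ 2 - s * v + 1 ≤ 0 := by
  have h'' : u + v ≤ s * (u * v) := by
    have e : u * v * (u⁻¹ + v⁻¹) = u + v := by field_simp; ring
    nlinarith [mul_le_mul_of_nonneg_left h' (mul_pos hu hv).le]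
  have hsv : 1 < s * v := by nlinarith
  nlinarith [mul_nonneg (by linarith : 0 ≤ s - v - u) (by linarith : 0 ≤ s * v - 1)]

section CompleteQuotients

noncomputable def completeQuot (ξ : ℝ) : ℕ → ℝ
  | 0 => ξ
  | n + 1 => (Int.fract (completeQuot ξ n))⁻¹

noncomputable def partialQuot (ξ : ℝ) (n : ℕ) : ℤ := ⌊completeQuot ξ n⌋

theorem completeQuot_eq (ξ : ℝ) (n : ℕ) :
    completeQuot ξ n = partialQuot ξ n + (completeQuot ξ (n + 1))⁻¹ := by
  rw [completeQuot, inv_inv, partialQuot, Int.floor_add_fract]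

noncomputable def approxFactor (ξ : ℝ) (n : ℕ) : ℝ :=
  completeQuot ξ (n + 1) + denRatio (partialQuot ξ) n

variable {ξ : ℝ} (hξ : Irrational ξ)
include hξ

theorem irrational_completeQuot : ∀ n, Irrational (completeQuot ξ n)
  | 0 => hξ
  | n + 1 => by
    rw [completeQuot, Int.fract]
    exact ((irrational_completeQuot n).sub_intCast _).inv

theorem one_lt_completeQuot (n : ℕ) : 1 < completeQuot ξ (n + 1) := by
  have hfract : Int.fract (completeQuot ξ n) ≠ 0 := by
    rw [Int.fract]
    exact ((irrational_completeQuot hξ n).sub_intCast _).ne_zero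
  exact one_lt_inv₀ ((Int.fract_nonneg _).lt_of_ne' hfract) |>.mpr (Int.fract_lt_one _)

theorem one_le_partialQuot (n : ℕ) : 1 ≤ partialQuot ξ (n + 1) :=
  Int.le_floor.mpr (by exact_mod_cast (one_lt_completeQuot hξ n).le)

theorem mul_completeQuot_mul_convDen_add (n : ℕ) :
    ξ * (completeQuot ξ n * convDen (partialQuot ξ) (n + 1) + convDen (partialQuot ξ) n) =
      completeQuot ξ n * convNum (partialQuot ξ) (n + 1) + convNum (partialQuot ξ) n := by
  induction n with
  | zero => simp [completeQuot, convNum, convDen]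
  | succ n ih =>
    have hx : completeQuot ξ (n + 1) ≠ 0 := (one_pos.trans (one_lt_completeQuot hξ n)).ne'
    rw [completeQuot_eq ξ n] at ih
    simp only [convNum, convDen]
    push_cast
    field_simp at ih ⊢
    linear_combination ih

theorem approxFactor_pos (n : ℕ) : 0 < approxFactor ξ n := by
  have h₁ : (0 : ℝ) ≤ convDen (partialQuot ξ) (n + 1) := by
    exact_mod_cast convDen_nonneg (one_le_partialQuot hξ) (n + 1)
  have h₂ := one_lt_completeQuot hξ n
  have h₃ : 0 ≤ denRatio (partialQuot ξ) n :=
    div_nonneg h₁ (by exact_mod_cast (convDen_pos (one_le_partialQuot hξ) n).le)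
  rw [approxFactor]
  linarith

theorem abs_sub_convergent (n : ℕ) :
    |ξ - convergent (partialQuot ξ) n| =
      1 / ((convDen (partialQuot ξ) (n + 2) : ℝ) ^ 2 * approxFactor ξ n) := by
  have hid := mul_completeQuot_mul_convDen_add hξ (n + 1)
  set a := partialQuot ξ with ha
  have hq : (0 : ℝ) < convDen a (n + 2) := by
    exact_mod_cast convDen_pos (one_le_partialQuot hξ) n
  have hpos : 0 < (convDen a (n + 2) : ℝ) ^ 2 * approxFactor ξ n :=
    mul_pos (pow_pos hq 2) (approxFactor_pos hξ n)
  have hdet : (convNum a (n + 1) * convDen a (n + 2) - convNum a (n + 2) * convDen a (n + 1) : ℝ)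
      = (-1) ^ (n + 2) := by exact_mod_cast convNum_mul_convDen_succ_sub a (n + 1)
  have key : (ξ - convergent a n) * ((convDen a (n + 2) : ℝ) ^ 2 * approxFactor ξ n)
      = (-1) ^ (n + 2) := by
    rw [convergent, approxFactor, denRatio, ← ha]
    push_cast
    field_simp
    linear_combination (convDen a (n + 2) : ℝ) * hid + hdet
  rw [eq_div_iff hpos.ne', ← abs_of_pos hpos, ← abs_mul, key]
  simp

theorem approxFactor_eq_inv_add_inv (n : ℕ) :
    approxFactor ξ n = (completeQuot ξ (n + 2))⁻¹ + (denRatio (partialQuot ξ) (n + 1))⁻¹ := by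
  rw [approxFactor, completeQuot_eq ξ (n + 1), inv_denRatio_succ (one_le_partialQuot hξ)]
  ring

theorem golden_le_denRatio {n : ℕ} (h₀ : approxFactor ξ n ≤ √5)
    (h₁ : approxFactor ξ (n + 1) ≤ √5) : (√5 - 1) / 2 ≤ denRatio (partialQuot ξ) (n + 1) := by
  set v := denRatio (partialQuot ξ) (n + 1)
  have hv : 0 < v := denRatio_pos (one_le_partialQuot hξ) n
  have hquad : v ^ 2 - √5 * v + 1 ≤ 0 :=
    sq_sub_mul_add_one_nonpos (one_pos.trans (one_lt_completeQuot hξ (n + 1))) hv h₁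
      (approxFactor_eq_inv_add_inv hξ n ▸ h₀)
  have h5 : √5 ^ 2 = 5 := Real.sq_sqrt (by norm_num)
  nlinarith [Real.sqrt_nonneg 5]

theorem exists_sqrt_five_lt_approxFactor (n : ℕ) : ∃ k, n ≤ k ∧ √5 < approxFactor ξ k := by
  by_contra! h
  have hv₀ := golden_le_denRatio hξ (h n le_rfl) (h (n + 1) (by omega))
  have hv₁ := golden_le_denRatio hξ (h (n + 1) (by omega)) (h (n + 2) (by omega))
  have hrec := inv_denRatio_succ (one_le_partialQuot hξ) (n + 1)
  have ha : (1 : ℝ) ≤ partialQuot ξ (n + 2) := by exact_mod_cast one_le_partialQuot hξ (n + 1)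
  have h5 : √5 ^ 2 = 5 := Real.sq_sqrt (by norm_num)
  have hgolden : denRatio (partialQuot ξ) (n + 2) = (√5 - 1) / 2 := by
    refine le_antisymm ?_ hv₁
    have hg : 0 < (√5 - 1) / 2 := by nlinarith [Real.sqrt_nonneg 5]
    rw [← inv_inv (denRatio _ _), hrec, inv_le_iff_one_le_mul₀ (by linarith)]
    nlinarith
  have hirr : Irrational √5 := by simpa using Nat.prime_five.irrational_sqrt
  refine hirr ⟨2 * (convDen (partialQuot ξ) (n + 3) / convDen (partialQuot ξ) (n + 4)) + 1, ?_⟩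
  rw [denRatio] at hgolden
  push_cast
  linarith

theorem abs_sub_convergent_lt {k : ℕ} (hk : √5 < approxFactor ξ k) :
    |ξ - convergent (partialQuot ξ) k| <
      1 / (√5 * ((convergent (partialQuot ξ) k).den : ℝ) ^ 2) := by
  have hden : ((convergent (partialQuot ξ) k).den : ℝ) = convDen (partialQuot ξ) (k + 2) := by
    exact_mod_cast den_convergent (one_le_partialQuot hξ) k
  have hq : (0 : ℝ) < convDen (partialQuot ξ) (k + 2) := by
    exact_mod_cast convDen_pos (one_le_partialQuot hξ) k
  rw [abs_sub_convergent hξ, hden, mul_comm (√5)]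
  gcongr

end CompleteQuotients

end Hurwitz

/-- Hurwitz's theorem: for any irrational real `ξ` there are infinitely many
rationals `p/q` with `|ξ - p/q| < 1/(√5 q²)`. -/
theorem hurwitz (ξ : ℝ) (hξ : Irrational ξ) :
    {r : ℚ | |ξ - (r : ℝ)| < 1 / (Real.sqrt 5 * (r.den : ℝ) ^ 2)}.Infinite := by
  refine Set.Infinite.of_image Rat.den (Set.infinite_of_forall_exists_gt fun N => ?_)
  have ha := Hurwitz.one_le_partialQuot hξ
  obtain ⟨k, hNk, hk⟩ := Hurwitz.exists_sqrt_five_lt_approxFactor hξ (N + 1)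
  refine ⟨_, ⟨Hurwitz.convergent _ k, Hurwitz.abs_sub_convergent_lt hξ hk, rfl⟩, ?_⟩
  have hden := Hurwitz.den_convergent ha k
  have hbound := Hurwitz.le_convDen ha k
  omega
end

section
/- Khintchine's rigidity lemma: Let ξ be a real number. Assume there exists a positive integer N₀ such that for each integer N ≥ N₀ there exist integers a and b with 1 ≤ a < N and |aξ − b| < 1/(2N). Then ξ is rational, and moreover for every integer N ≥ N₀, every pair of integers (a, b) with 1 ≤ a < N and |aξ − b| < 1/(2N) satisfies aξ = b. -/
/-!
Two good approximations `b/a`, `b'/a'` of `ξ` whose errors are small compared with the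
denominators must be the same fraction: `|a b' - a' b| ≤ a |a'ξ - b'| + a' |aξ - b| < 1`
forces the integer `a b' - a' b` to vanish. Comparing the approximations at consecutive
levels `N` and `N + 1` shows they all represent one rational `c`, and since the error of
the approximation at level `N` is at least `|ξ - c|` and below `1/(2N)`, we get `ξ = c`.
-/

def IsGoodApprox (ξ : ℝ) (N : ℕ) (a b : ℤ) : Prop :=
  1 ≤ a ∧ a < N ∧ |(a : ℝ) * ξ - b| < 1 / (2 * N)

theorem Int.mul_eq_mul_of_abs_mul_sub_lt {ξ ε ε' : ℝ} {a b a' b' : ℤ} (ha : 0 < a)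
    (ha' : 0 < a') (h : |(a : ℝ) * ξ - b| < ε) (h' : |(a' : ℝ) * ξ - b'| < ε')
    (hε : a * ε' + a' * ε ≤ 1) : a * b' = a' * b := by
  have ha₀ : (0 : ℝ) < a := by exact_mod_cast ha
  have ha₀' : (0 : ℝ) < a' := by exact_mod_cast ha'
  have hlt : |((a * b' - a' * b : ℤ) : ℝ)| < 1 :=
    calc |((a * b' - a' * b : ℤ) : ℝ)|
        = |a * (b' - a' * ξ) + a' * (a * ξ - b)| := by push_cast; ring_nf
      _ ≤ a * |(a' : ℝ) * ξ - b'| + a' * |(a : ℝ) * ξ - b| := by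
          refine (abs_add_le _ _).trans_eq ?_
          rw [abs_mul, abs_mul, abs_of_pos ha₀, abs_of_pos ha₀', abs_sub_comm (b' : ℝ)]
      _ < a * ε' + a' * ε := by gcongr
      _ ≤ 1 := hε
  have := Int.abs_lt_one_iff.mp (by exact_mod_cast hlt)
  linarith

namespace IsGoodApprox

variable {ξ : ℝ} {N M : ℕ} {a b a' b' : ℤ}

/-- Since `a ≤ N - 1` and `a' ≤ M - 1`, the condition on `M - N` is what makes
`a / (2M) + a' / (2N) ≤ 1`; it holds for `M = N` and `M = N + 1`. -/
theorem mul_eq_mul (h : IsGoodApprox ξ N a b) (h' : IsGoodApprox ξ M a' b')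
    (hNM : ((M : ℝ) - N) ^ 2 ≤ M + N) : a * b' = a' * b := by
  obtain ⟨ha, haN, hab⟩ := h
  obtain ⟨ha', haM, hab'⟩ := h'
  refine Int.mul_eq_mul_of_abs_mul_sub_lt ha ha' hab hab' ?_
  have haN : (a : ℝ) ≤ N - 1 := by exact_mod_cast Int.le_sub_one_of_lt haN
  have haM : (a' : ℝ) ≤ M - 1 := by exact_mod_cast Int.le_sub_one_of_lt haM
  have hN : (0 : ℝ) < N := by linarith [show (1 : ℝ) ≤ a by exact_mod_cast ha]
  have hM : (0 : ℝ) < M := by linarith [show (1 : ℝ) ≤ a' by exact_mod_cast ha']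
  rw [mul_one_div, mul_one_div, div_add_div _ _ (by positivity) (by positivity),
    div_le_one (by positivity)]
  nlinarith

theorem abs_sub_lt (h : IsGoodApprox ξ N a b) {c : ℝ} (hc : (b : ℝ) = a * c) :
    |ξ - c| < 1 / (2 * N) := by
  obtain ⟨ha, -, hab⟩ := h
  have ha₁ : (1 : ℝ) ≤ a := by exact_mod_cast ha
  calc |ξ - c| ≤ a * |ξ - c| := le_mul_of_one_le_left (abs_nonneg _) ha₁
    _ = |(a : ℝ) * ξ - b| := by
        rw [hc, ← mul_sub, abs_mul, abs_of_pos (by linarith : (0 : ℝ) < a)]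
    _ < 1 / (2 * N) := hab

theorem mul_eq_of_mul_eq (h : IsGoodApprox ξ N a b) (h' : IsGoodApprox ξ N a' b')
    (hexact : (a' : ℝ) * ξ = b') : (a : ℝ) * ξ = b := by
  have hcross : (a : ℝ) * b' = a' * b := by exact_mod_cast h.mul_eq_mul h' (by simp)
  have ha' : (a' : ℝ) ≠ 0 := by exact_mod_cast (zero_lt_one.trans_le h'.1).ne'
  apply mul_left_cancel₀ ha'
  rw [← hcross, ← hexact]
  ring

end IsGoodApprox

theorem exists_rat_forall_eq_mul_of_isGoodApprox {ξ : ℝ} {N₀ : ℕ} {A B : ℕ → ℤ}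
    (h : ∀ n, IsGoodApprox ξ (N₀ + n) (A n) (B n)) :
    ∃ c : ℚ, ∀ n, (B n : ℝ) = A n * c := by
  have hA : ∀ n, (A n : ℝ) ≠ 0 := fun n => by exact_mod_cast (zero_lt_one.trans_le (h n).1).ne'
  refine ⟨B 0 / A 0, fun n => ?_⟩
  induction n with
  | zero => push_cast; field_simp [hA 0]
  | succ n ih =>
    have hcross : (A n : ℝ) * B (n + 1) = A (n + 1) * B n := by
      exact_mod_cast (h n).mul_eq_mul (h (n + 1)) (by push_cast; nlinarith)
    apply mul_left_cancel₀ (hA n)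
    rw [hcross, ih]
    ring

theorem eq_of_forall_abs_sub_lt {x y : ℝ} {N₀ : ℕ}
    (h : ∀ n, |x - y| < 1 / (2 * (N₀ + n : ℕ))) : x = y := by
  have hlim : Filter.Tendsto (fun n : ℕ => 1 / (2 * (N₀ + n : ℕ) : ℝ)) Filter.atTop (nhds 0) := by
    have := (tendsto_const_div_atTop_nhds_zero_nat (1 / 2 : ℝ)).comp (Filter.tendsto_add_atTop_nat N₀)
    refine this.congr fun n => ?_
    rw [Function.comp_apply, div_div, add_comm]
  have := ge_of_tendsto' hlim fun n => (h n).le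
  exact sub_eq_zero.mp (abs_nonpos_iff.mp this)

theorem khintchine_rigidity_general (ξ : ℝ) (N₀ : ℕ)
    (h : ∀ N : ℕ, N₀ ≤ N → ∃ a b : ℤ, 1 ≤ a ∧ a < (N : ℤ) ∧
      |(a : ℝ) * ξ - (b : ℝ)| < 1 / (2 * N)) :
    (∃ r : ℚ, ξ = (r : ℝ)) ∧
      ∀ N : ℕ, N₀ ≤ N → ∀ a b : ℤ, 1 ≤ a → a < (N : ℤ) →
        |(a : ℝ) * ξ - (b : ℝ)| < 1 / (2 * N) → (a : ℝ) * ξ = (b : ℝ) := by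
  have hgood : ∀ n, ∃ a b, IsGoodApprox ξ (N₀ + n) a b := fun n => h _ (Nat.le_add_right N₀ n)
  choose A B hAB using hgood
  obtain ⟨c, hc⟩ := exists_rat_forall_eq_mul_of_isGoodApprox hAB
  have hξ : ξ = c := eq_of_forall_abs_sub_lt fun n => (hAB n).abs_sub_lt (hc n)
  refine ⟨⟨c, hξ⟩, fun N hN a b ha haN hab => ?_⟩
  obtain ⟨n, rfl⟩ := Nat.exists_eq_add_of_le hN
  exact IsGoodApprox.mul_eq_of_mul_eq ⟨ha, haN, hab⟩ (hAB n) (by rw [hc n, hξ, mul_comm])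

/-- Khintchine's rigidity lemma. -/
theorem khintchine_rigidity (ξ : ℝ) (N₀ : ℕ) (hN₀ : 0 < N₀)
    (h : ∀ N : ℕ, N₀ ≤ N → ∃ a b : ℤ, 1 ≤ a ∧ a < (N : ℤ) ∧
      |(a : ℝ) * ξ - (b : ℝ)| < 1 / (2 * N)) :
    (∃ r : ℚ, ξ = (r : ℝ)) ∧
      ∀ N : ℕ, N₀ ≤ N → ∀ a b : ℤ, 1 ≤ a → a < (N : ℤ) →
        |(a : ℝ) * ξ - (b : ℝ)| < 1 / (2 * N) → (a : ℝ) * ξ = (b : ℝ) :=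
  khintchine_rigidity_general ξ N₀ h
end
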